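/- There exists a universal constant C > 0 with the following property. Fix ε ∈ (0, 1/2), δ ∈ [0, 1), and A ∈ ℝ^{m×n}. If M(x) = Ax + z is an additive noise mechanism with noise z having finite second moments that is (ε,δ)-differentially private, then for every x ∈ ℝ^n and every θ ∈ ℝ^m, √(Var[θᵀM(x)]) ≥ (1 − δ') · w_{AB₁^n}(θ) / (C ε), where δ' = (e^{1/2} − 1) δ / (e^ε − 1). -/

import Mathlib

open MeasureTheory Matrix
open scoped ENNReal

noncomputable section

namespace DPPaper

variable {ι κ : Type*}

/-- Two inputs `x, x' : ι → ℝ` are neighboring if `‖x - x'‖₁ ≤ 1`. -/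
def Neighboring [Fintype ι] (x x' : ι → ℝ) : Prop :=
  ∑ i, |x i - x' i| ≤ 1

/-- A mechanism `M` (a map from inputs to probability measures on an output space `Ω`)
is `(ε,δ)`-differentially private if for all neighboring inputs and all measurable sets `S`,
`M x S ≤ e^ε · M x' S + δ`. -/
def IsDP [Fintype ι] {Ω : Type*} [MeasurableSpace Ω]
    (M : (ι → ℝ) → Measure Ω) (ε δ : ℝ) : Prop :=
  ∀ x x' : ι → ℝ, Neighboring x x' → ∀ S : Set Ω, MeasurableSet S →
    M x S ≤ ENNReal.ofReal (Real.exp ε) * M x' S + ENNReal.ofReal δ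

/-- The `ℓ_p^p`-error of a mechanism `M` on the query matrix `A`:
`sup_x (E_{Y ~ M x} [ ‖Y - A x‖_p^p ])^{1/p}`, valued in `ℝ≥0∞`. -/
def errLp [Fintype ι] [Fintype κ] (M : (ι → ℝ) → Measure (κ → ℝ))
    (A : Matrix κ ι ℝ) (p : ℝ) : ℝ≥0∞ :=
  ⨆ x : ι → ℝ,
    (∫⁻ y, ENNReal.ofReal (∑ i, |y i - A.mulVec x i| ^ p) ∂(M x)) ^ (1 / p)

/-- The `q`-trace of a square matrix: `(∑ i, U i i ^ q)^{1/q}`. -/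
def trq [Fintype κ] (q : ℝ) (U : Matrix κ κ ℝ) : ℝ :=
  (∑ i, (U i i) ^ q) ^ (1 / q)

/-- The `1 → 2` operator norm of a matrix: the largest `ℓ₂`-norm of a column. -/
def norm12 [Fintype ι] [Fintype κ] (R : Matrix κ ι ℝ) : ℝ :=
  ⨆ j : ι, Real.sqrt (∑ i, (R i j) ^ 2)

/-- The factorization norm `γ_{(p)}(A)`. -/
def gammaP [Fintype ι] [Fintype κ] (p : ℝ) (A : Matrix κ ι ℝ) : ℝ :=
  sInf { c : ℝ | ∃ (k : ℕ) (L : Matrix κ (Fin k) ℝ) (R : Matrix (Fin k) ι ℝ),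
    L * R = A ∧ c = Real.sqrt (trq (p / 2) (L * Lᵀ)) * norm12 R }

/-- The Schatten-1 norm of a matrix: the trace of the PSD square root of `Aᵀ * A`,
i.e. the sum of the singular values of `A`. -/
def schatten1 [Fintype ι] [Fintype κ] [DecidableEq ι] (A : Matrix κ ι ℝ) : ℝ :=
  ((Matrix.posSemidef_conjTranspose_mul_self A).1.eigenvectorUnitary.1 *
    Matrix.diagonal ((RCLike.ofReal : ℝ → ℝ) ∘ (√·) ∘ (Matrix.posSemidef_conjTranspose_mul_self A).1.eigenvalues) *
    (star (Matrix.posSemidef_conjTranspose_mul_self A).1.eigenvectorUnitary : Matrix ι ι ℝ)).trace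

/-- The sensitivity polytope `A B₁^n = {A x : ‖x‖₁ ≤ 1}`. -/
def sensPolytope [Fintype ι] (A : Matrix κ ι ℝ) : Set (κ → ℝ) :=
  {v | ∃ x : ι → ℝ, (∑ i, |x i|) ≤ 1 ∧ v = A.mulVec x}

/-- The width of a set `K` in direction `θ`. -/
def width [Fintype κ] (K : Set (κ → ℝ)) (θ : κ → ℝ) : ℝ :=
  sSup ((fun v => ∑ i, θ i * v i) '' K) - sInf ((fun v => ∑ i, θ i * v i) '' K)

/-- `κ(A)`: the minimal width of the sensitivity polytope over all unit directions. -/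
def kappa [Fintype ι] [Fintype κ] (A : Matrix κ ι ℝ) : ℝ :=
  sInf { c : ℝ | ∃ θ : κ → ℝ, (∑ i, (θ i) ^ 2) = 1 ∧ c = width (sensPolytope A) θ }

/-- The prefix-sum (continual counting) matrix: lower-triangular all ones. -/
def Aprefix (n : ℕ) : Matrix (Fin n) (Fin n) ℝ :=
  fun i j => if j ≤ i then 1 else 0

/-- The covariance matrix of a measure on `κ → ℝ`. -/
def covMatrix [Fintype κ] (μ : Measure (κ → ℝ)) : Matrix κ κ ℝ :=
  fun i j => ∫ y, (y i - ∫ y', y' i ∂μ) * (y j - ∫ y', y' j ∂μ) ∂μ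

/-- The parity query matrix `Q_{d,w}`: rows indexed by `w`-element subsets `P` of `{1,…,d}`,
columns indexed by points of `{-1,1}^d` (encoded as `Fin d → Bool`), entry `∏_{i ∈ P} x_i`. -/
def parityMatrix (d w : ℕ) : Matrix {P : Finset (Fin d) // P.card = w} (Fin d → Bool) ℝ :=
  fun P b => ∏ i ∈ P.1, (if b i then (1 : ℝ) else -1)

/-- The Hadamard matrices: `H_0 = [1]`, `H_{d+1} = [[H_d, H_d], [H_d, -H_d]]`. -/
def Hadamard : (d : ℕ) → Matrix (Fin (2 ^ d)) (Fin (2 ^ d)) ℝ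
  | 0 => fun _ _ => 1
  | (d + 1) =>
    Matrix.reindex
      (finSumFinEquiv.trans (finCongr (by rw [pow_succ, mul_two])))
      (finSumFinEquiv.trans (finCongr (by rw [pow_succ, mul_two])))
      (Matrix.fromBlocks (Hadamard d) (Hadamard d) (Hadamard d) (-(Hadamard d)))

end DPPaper

open DPPaper

/-!
Moving the input `k ≈ 1 / (2ε)` times along a signed basis vector `d` shifts the marginal
`θᵀ M(x)` by `k a`, where `a = θᵀ A d` is at least half the width of the sensitivity polytope in
direction `θ`. By group privacy the shifted and unshifted marginals still give every set the same
probability up to the factor `e^{1/2}` and the additive `δ'`. Chebyshev's inequality on the ball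
of radius `k a / 2` around the mean then forces `(1 - δ') (k a)² ≲ Var[θᵀ M(x)]`, and
`k a ≳ w / ε`.
-/

open ProbabilityTheory

namespace DPPaper

section Width

variable {ι κ : Type*} [Fintype ι] [Fintype κ]

lemma width_eq (K : Set (κ → ℝ)) (θ : κ → ℝ) :
    width K θ = sSup ((θ ⬝ᵥ ·) '' K) - sInf ((θ ⬝ᵥ ·) '' K) :=
  rfl

lemma width_nonneg {K : Set (κ → ℝ)} {θ : κ → ℝ} {a : ℝ} (h : ∀ v ∈ K, |θ ⬝ᵥ v| ≤ a) :
    0 ≤ width K θ := by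
  have hbdd : ∀ y ∈ (θ ⬝ᵥ ·) '' K, |y| ≤ a := by
    rintro _ ⟨v, hv, rfl⟩
    exact h v hv
  rw [width_eq, sub_nonneg]
  exact Real.sInf_le_sSup _ ⟨-a, fun y hy => (abs_le.1 (hbdd y hy)).1⟩
    ⟨a, fun y hy => (abs_le.1 (hbdd y hy)).2⟩

lemma width_le_two_mul {K : Set (κ → ℝ)} (hK : K.Nonempty) {θ : κ → ℝ} {a : ℝ}
    (h : ∀ v ∈ K, |θ ⬝ᵥ v| ≤ a) : width K θ ≤ 2 * a := by
  have ha : 0 ≤ a := (abs_nonneg _).trans (h _ hK.some_mem)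
  have hsup : sSup ((θ ⬝ᵥ ·) '' K) ≤ a :=
    Real.sSup_le (by rintro _ ⟨v, hv, rfl⟩; exact (abs_le.1 (h v hv)).2) ha
  have hinf : -a ≤ sInf ((θ ⬝ᵥ ·) '' K) :=
    le_csInf (hK.image _) (by rintro _ ⟨v, hv, rfl⟩; exact (abs_le.1 (h v hv)).1)
  rw [width_eq]
  linarith

/-- `ℓ₁`–`ℓ∞` duality, attained at a signed standard basis vector. -/
lemma exists_abs_dotProduct_le (c : ι → ℝ) :
    ∃ d : ι → ℝ, ∑ j, |d j| ≤ 1 ∧ ∀ x : ι → ℝ, ∑ j, |x j| ≤ 1 → |c ⬝ᵥ x| ≤ c ⬝ᵥ d := by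
  classical
  rcases isEmpty_or_nonempty ι with hι | hι
  · exact ⟨0, by simp, fun x _ => by simp [dotProduct]⟩
  obtain ⟨j, hj⟩ := Finite.exists_max fun j => |c j|
  refine ⟨Pi.single j (SignType.sign (c j) : ℝ), ?_, fun x hx => ?_⟩
  · rw [Finset.sum_eq_single j (fun k _ hk => by simp [hk]) (by simp)]
    cases SignType.sign (c j) <;> simp
  · calc |c ⬝ᵥ x| ≤ ∑ k, |c k| * |x k| := by
          simpa only [dotProduct, abs_mul] using Finset.abs_sum_le_sum_abs (fun k => c k * x k) _
      _ ≤ ∑ k, |c j| * |x k| :=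
          Finset.sum_le_sum fun k _ => mul_le_mul_of_nonneg_right (hj k) (abs_nonneg _)
      _ = |c j| * ∑ k, |x k| := by rw [Finset.mul_sum]
      _ ≤ |c j| := mul_le_of_le_one_right (abs_nonneg _) hx
      _ = c ⬝ᵥ Pi.single j (SignType.sign (c j) : ℝ) := by
          rw [dotProduct_single, self_mul_sign]

lemma exists_width_sensPolytope_le (A : Matrix κ ι ℝ) (θ : κ → ℝ) :
    ∃ d : ι → ℝ, ∑ j, |d j| ≤ 1 ∧
      0 ≤ width (sensPolytope A) θ ∧ width (sensPolytope A) θ ≤ 2 * (θ ⬝ᵥ A *ᵥ d) := by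
  obtain ⟨d, hd, hmax⟩ := exists_abs_dotProduct_le (θ ᵥ* A)
  have hK : ∀ v ∈ sensPolytope A, |θ ⬝ᵥ v| ≤ θ ⬝ᵥ A *ᵥ d := by
    rintro _ ⟨y, hy, rfl⟩
    rw [dotProduct_mulVec, dotProduct_mulVec]
    exact hmax y hy
  have hne : (sensPolytope A).Nonempty := ⟨0, 0, by simp, by simp⟩
  exact ⟨d, hd, width_nonneg hK, width_le_two_mul hne hK⟩

end Width

section GroupPrivacy

variable {ι Ω : Type*} [Fintype ι] [MeasurableSpace Ω] {M : (ι → ℝ) → Measure Ω} {ε δ : ℝ}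

lemma neighboring_add_right (x : ι → ℝ) {d : ι → ℝ} (hd : ∑ j, |d j| ≤ 1) :
    Neighboring x (x + d) := by
  simpa [Neighboring] using hd

lemma IsDP.measureReal_le [∀ x, IsFiniteMeasure (M x)] (hM : IsDP M ε δ) (hδ : 0 ≤ δ)
    {x x' : ι → ℝ} (hxx' : Neighboring x x') {S : Set Ω} (hS : MeasurableSet S) :
    (M x).real S ≤ Real.exp ε * (M x').real S + δ := by
  refine ENNReal.toReal_le_of_le_ofReal (by positivity) ((hM x x' hxx' S hS).trans_eq ?_)
  rw [ENNReal.ofReal_add (by positivity) hδ, ENNReal.ofReal_mul (Real.exp_nonneg _),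
    ofReal_measureReal]

lemma IsDP.measureReal_le_of_chain [∀ x, IsFiniteMeasure (M x)] (hM : IsDP M ε δ) (hδ : 0 ≤ δ)
    {x : ℕ → ι → ℝ} (hx : ∀ i, Neighboring (x i) (x (i + 1))) {S : Set Ω} (hS : MeasurableSet S)
    (k : ℕ) :
    (M (x 0)).real S
      ≤ Real.exp ε ^ k * (M (x k)).real S + δ * ∑ l ∈ Finset.range k, Real.exp ε ^ l := by
  induction k with
  | zero => simp
  | succ k ih =>
    calc (M (x 0)).real S
        ≤ Real.exp ε ^ k * (M (x k)).real S + δ * ∑ l ∈ Finset.range k, Real.exp ε ^ l := ih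
      _ ≤ Real.exp ε ^ k * (Real.exp ε * (M (x (k + 1))).real S + δ)
            + δ * ∑ l ∈ Finset.range k, Real.exp ε ^ l := by
          gcongr
          exact hM.measureReal_le hδ (hx k) hS
      _ = _ := by rw [Finset.sum_range_succ]; ring

lemma sum_range_exp_pow_le (hε : 0 < ε) {k : ℕ} {t : ℝ} (hk : k * ε ≤ t) :
    ∑ l ∈ Finset.range k, Real.exp ε ^ l ≤ (Real.exp t - 1) / (Real.exp ε - 1) := by
  have hε1 : 0 < Real.exp ε - 1 := by linarith [Real.add_one_lt_exp hε.ne']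
  rw [geom_sum_eq (by linarith) k, ← Real.exp_nat_mul]
  gcongr

/-- Group privacy: each of the `k` neighbouring steps of size `d` costs a factor `e^ε` and an
additive `δ`. -/
lemma IsDP.measureReal_le_add_smul [∀ x, IsFiniteMeasure (M x)] (hM : IsDP M ε δ) (hε : 0 < ε)
    (hδ : 0 ≤ δ) {d : ι → ℝ} (hd : ∑ j, |d j| ≤ 1) {k : ℕ} {t : ℝ} (hk : k * ε ≤ t)
    (x : ι → ℝ) {S : Set Ω} (hS : MeasurableSet S) :
    (M x).real S
      ≤ Real.exp t * (M (x + (k : ℝ) • d)).real S + (Real.exp t - 1) * δ / (Real.exp ε - 1) := by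
  have hchain : ∀ i : ℕ, Neighboring (x + (i : ℝ) • d) (x + ((i + 1 : ℕ) : ℝ) • d) := fun i => by
    simpa [add_smul, add_assoc] using neighboring_add_right (x + (i : ℝ) • d) hd
  have h := hM.measureReal_le_of_chain (x := fun i => x + (i : ℝ) • d) hδ hchain hS k
  simp only [Nat.cast_zero, zero_smul, add_zero] at h
  refine h.trans (add_le_add ?_ ?_)
  · rw [← Real.exp_nat_mul]
    gcongr
  · rw [mul_comm (Real.exp t - 1), mul_div_assoc]
    exact mul_le_mul_of_nonneg_left (sum_range_exp_pow_le hε hk) hδ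

end GroupPrivacy

lemma one_sub_mul_sq_le_variance_of_measureReal_le {Ω : Type*} [MeasurableSpace Ω]
    {μ : Measure Ω} [IsProbabilityMeasure μ] {X : Ω → ℝ} (hX : MemLp X 2 μ) {c η s : ℝ}
    (hc : 0 ≤ c)
    (h : ∀ S : Set ℝ, MeasurableSet S → μ.real (X ⁻¹' S) ≤ c * μ.real ((X · + s) ⁻¹' S) + η) :
    (1 - η) * s ^ 2 ≤ 4 * (1 + c) * Var[X; μ] := by
  rcases eq_or_ne s 0 with rfl | hs
  · simpa using mul_nonneg (by linarith) (variance_nonneg X μ)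
  set r := |s| / 2
  have hr : 0 < r := by positivity
  have hsr : |s| = 2 * r := by ring
  set I := Set.Ioo (μ[X] - r) (μ[X] + r)
  set T := {ω | r ≤ |X ω - μ[X]|}
  -- Chebyshev makes `T` unlikely, while both `X ∉ I` and `X + s ∈ I` force `X ∈ T`.
  have hcover : Set.univ ⊆ X ⁻¹' I ∪ T := fun ω _ => by
    by_cases hω : r ≤ |X ω - μ[X]|
    · exact Or.inr hω
    · obtain ⟨h₁, h₂⟩ := abs_sub_lt_iff.1 (not_le.1 hω)
      exact Or.inl ⟨by linarith, by linarith⟩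
  have hshift : (X · + s) ⁻¹' I ⊆ T := fun ω ⟨h₁, h₂⟩ => by
    show r ≤ |X ω - μ[X]|
    cases abs_cases s <;> cases abs_cases (X ω - μ[X]) <;> linarith
  have hcheb : μ.real T ≤ Var[X; μ] / r ^ 2 :=
    ENNReal.toReal_le_of_le_ofReal (div_nonneg (variance_nonneg _ _) (sq_nonneg _))
      (meas_ge_le_variance_div_sq hX hr)
  have hsum : 1 ≤ μ.real (X ⁻¹' I) + μ.real T := by
    simpa using (measureReal_mono hcover (measure_ne_top μ _)).trans (measureReal_union_le _ _)
  have hI : μ.real (X ⁻¹' I) ≤ c * μ.real T + η :=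
    (h I measurableSet_Ioo).trans (by gcongr; exact measure_ne_top μ T)
  have key : (1 - η) * r ^ 2 ≤ (1 + c) * Var[X; μ] := by
    rw [← le_div_iff₀ (by positivity), mul_div_assoc]
    nlinarith [mul_le_mul_of_nonneg_left hcheb (by linarith : (0 : ℝ) ≤ 1 + c)]
  rw [← sq_abs s, hsr]
  linarith

section AdditiveNoise

variable {ι κ : Type*} [Fintype ι] [Fintype κ]

lemma measurable_dotProduct (θ : κ → ℝ) : Measurable (θ ⬝ᵥ ·) :=
  (continuous_const.dotProduct continuous_id).measurable

lemma map_add_mulVec_add_apply (ν : Measure (κ → ℝ)) (A : Matrix κ ι ℝ) (θ : κ → ℝ)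
    (x v : ι → ℝ) {S : Set ℝ} (hS : MeasurableSet S) :
    ν.map (A *ᵥ (x + v) + ·) ((θ ⬝ᵥ ·) ⁻¹' S)
      = ν.map (A *ᵥ x + ·) ((θ ⬝ᵥ · + θ ⬝ᵥ A *ᵥ v) ⁻¹' S) := by
  rw [Measure.map_apply (by fun_prop) (hS.preimage (measurable_dotProduct θ)),
    Measure.map_apply (by fun_prop) (hS.preimage ((measurable_dotProduct θ).add_const _))]
  congr 1
  ext w
  simp [mulVec_add, dotProduct_add, add_right_comm]

lemma memLp_dotProduct_map_add {ν : Measure (κ → ℝ)} [IsFiniteMeasure ν]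
    (hν : ∀ i, Integrable (fun w => w i ^ 2) ν) (θ u : κ → ℝ) :
    MemLp (θ ⬝ᵥ ·) 2 (ν.map (u + ·)) := by
  rw [memLp_map_measure_iff (measurable_dotProduct θ).aestronglyMeasurable (by fun_prop)]
  have hcoord : ∀ i, MemLp (fun w : κ → ℝ => θ i * w i) 2 ν := fun i =>
    ((memLp_two_iff_integrable_sq (measurable_pi_apply i).aestronglyMeasurable).2
      (hν i)).const_mul _
  convert (memLp_const (θ ⬝ᵥ u)).add (memLp_finsetSum Finset.univ fun i _ => hcoord i) using 1
  ext w
  simp only [Function.comp_apply, dotProduct_add, Pi.add_apply]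
  rfl

lemma IsDP.one_sub_mul_sq_le_variance_map_add_mulVec {ν : Measure (κ → ℝ)} [IsProbabilityMeasure ν]
    (hν : ∀ i, Integrable (fun w => w i ^ 2) ν)
    {A : Matrix κ ι ℝ} {ε δ : ℝ} (hM : IsDP (fun x => ν.map (A *ᵥ x + ·)) ε δ) (hε : 0 < ε)
    (hδ : 0 ≤ δ) {d : ι → ℝ} (hd : ∑ j, |d j| ≤ 1) {k : ℕ} {t : ℝ} (hk : k * ε ≤ t)
    (x : ι → ℝ) (θ : κ → ℝ) :
    (1 - (Real.exp t - 1) * δ / (Real.exp ε - 1)) * (k * (θ ⬝ᵥ A *ᵥ d)) ^ 2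
      ≤ 4 * (1 + Real.exp t) * Var[(θ ⬝ᵥ ·); ν.map (A *ᵥ x + ·)] := by
  have : IsProbabilityMeasure (ν.map (A *ᵥ x + ·)) :=
    Measure.isProbabilityMeasure_map (by fun_prop)
  have hshift := one_sub_mul_sq_le_variance_of_measureReal_le (memLp_dotProduct_map_add hν θ _)
    (s := θ ⬝ᵥ A *ᵥ ((k : ℝ) • d)) (Real.exp_nonneg t) fun S hS => by
      have h := hM.measureReal_le_add_smul hε hδ hd hk x (hS.preimage (measurable_dotProduct θ))
      rwa [measureReal_def, measureReal_def, map_add_mulVec_add_apply ν A θ x _ hS] at h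
  rwa [mulVec_smul, dotProduct_smul, smul_eq_mul] at hshift

end AdditiveNoise

lemma exists_nat_mul_mem_Icc {ε : ℝ} (hε : 0 < ε) (hε2 : ε < 1 / 2) :
    ∃ k : ℕ, (k : ℝ) * ε ∈ Set.Icc (1 / 4) (1 / 2) := by
  refine ⟨⌊(2 * ε)⁻¹⌋₊, ?_, ?_⟩
  · have h1 : 1 ≤ (⌊(2 * ε)⁻¹⌋₊ : ℝ) := by
      exact_mod_cast Nat.le_floor <| by
        rw [Nat.cast_one]
        exact (one_le_inv₀ (by positivity)).2 (by linarith)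
    have h2 : (2 * ε)⁻¹ < ⌊(2 * ε)⁻¹⌋₊ + 1 := Nat.lt_floor_add_one _
    rw [inv_lt_iff_one_lt_mul₀ (by positivity)] at h2
    nlinarith
  · have h := Nat.floor_le (inv_nonneg.2 (by positivity : (0 : ℝ) ≤ 2 * ε))
    calc (⌊(2 * ε)⁻¹⌋₊ : ℝ) * ε ≤ (2 * ε)⁻¹ * ε := by gcongr
      _ = 1 / 2 := by field_simp

end DPPaper

/-- for an (ε,δ)-DP additive noise mechanism in the high privacy regime,
  every one-dimensional marginal has standard deviation ≳ (1-δ')·w_{AB₁ⁿ}(θ)/ε. -/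
theorem marginal_variance_lower_bound :
    ∃ C : ℝ, 0 < C ∧
      ∀ (m n : ℕ) (ε δ : ℝ), 0 < ε → ε < 1 / 2 → 0 ≤ δ → δ < 1 →
        ∀ (A : Matrix (Fin m) (Fin n) ℝ) (ν : Measure (Fin m → ℝ)),
          IsProbabilityMeasure ν → (∀ i, Integrable (fun w => (w i) ^ 2) ν) →
          IsDP (fun x => Measure.map (fun w => A.mulVec x + w) ν) ε δ →
          ∀ (x : Fin n → ℝ) (θ : Fin m → ℝ),
            Real.sqrt (∫ y, ((∑ i, θ i * y i) -
                ∫ y', ∑ i, θ i * y' i ∂(Measure.map (fun w => A.mulVec x + w) ν)) ^ 2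
                ∂(Measure.map (fun w => A.mulVec x + w) ν))
              ≥ (1 - (Real.exp (1 / 2) - 1) * δ / (Real.exp ε - 1))
                  * width (sensPolytope A) θ / (C * ε) := by
  refine ⟨32, by norm_num, fun m n ε δ hε hε2 hδ _ A ν hν hν2 hDP x θ => ?_⟩
  set δ' := (Real.exp (1 / 2) - 1) * δ / (Real.exp ε - 1)
  set μ := ν.map (fun w => A *ᵥ x + w)
  obtain ⟨d, hd, hW0, hWd⟩ := exists_width_sensPolytope_le A θ
  obtain ⟨k, hk4, hk2⟩ := exists_nat_mul_mem_Icc hε hε2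
  have hvar := hDP.one_sub_mul_sq_le_variance_map_add_mulVec hν2 hε hδ hd hk2 x θ
  set a := θ ⬝ᵥ A *ᵥ d
  set V := Var[(θ ⬝ᵥ ·); μ]
  have hV : V = ∫ y, ((∑ i, θ i * y i) - ∫ y', ∑ i, θ i * y' i ∂μ) ^ 2 ∂μ :=
    variance_eq_integral (measurable_dotProduct θ).aemeasurable
  rw [← hV, ge_iff_le]
  rcases le_or_gt 1 δ' with hδ'1 | hδ'1
  · exact (div_nonpos_of_nonpos_of_nonneg (mul_nonpos_of_nonpos_of_nonneg (by linarith) hW0)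
      (by positivity)).trans (Real.sqrt_nonneg V)
  have hδ' : 0 ≤ δ' :=
    div_nonneg (mul_nonneg (by linarith [Real.add_one_le_exp (1 / 2 : ℝ)]) hδ)
      (by linarith [Real.add_one_le_exp ε])
  have he : Real.exp (1 / 2) ≤ 3 := by
    linarith [Real.exp_le_exp.2 (by norm_num : (1 / 2 : ℝ) ≤ 1), Real.exp_one_lt_d9]
  have hσ : (1 - δ') * (k * a) / 4 ≤ √V := Real.le_sqrt_of_sq_le <| by
    nlinarith [mul_nonneg hδ' (mul_nonneg (sub_nonneg.2 hδ'1.le) (sq_nonneg (k * a))),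
      mul_nonneg (sub_nonneg.2 he) (variance_nonneg (θ ⬝ᵥ ·) μ)]
  rw [div_le_iff₀ (by positivity)]
  calc (1 - δ') * width (sensPolytope A) θ ≤ (1 - δ') * (2 * a) := by gcongr
    _ ≤ (1 - δ') * (2 * a) * (4 * (k * ε)) :=
        le_mul_of_one_le_right (mul_nonneg (by linarith) (by linarith)) (by linarith)
    _ = 32 * ε * ((1 - δ') * (k * a) / 4) := by ring
    _ ≤ √V * (32 * ε) := by rw [mul_comm √V]; gcongr
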